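/- Let h : Ω × ℝ^k → 2^{ℝ^k} belong to the class 𝕄(Ω, ℝ^k, q, α, m), and let 𝓗 be its canonical extension from L^q(Ω, ℝ^k) to L^{q*}(Ω, ℝ^k), 1/q + 1/q* = 1. Then 𝓗 is maximal monotone, surjective, and its effective domain is all of L^q(Ω, ℝ^k). -/

import Mathlib

open MeasureTheory Filter Topology
open scoped ENNReal

/-- Euclidean inner product on `ℝ^k`. -/
noncomputable def dotk {k : ℕ} (a b : Fin k → ℝ) : ℝ := ∑ i, a i * b i

/-- Euclidean norm on `ℝ^k`. -/
noncomputable def nrmk {k : ℕ} (a : Fin k → ℝ) : ℝ := Real.sqrt (dotk a a)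

/-- Monotonicity of a multivalued map `ℝ^k → 2^{ℝ^k}`. -/
def MonotoneE {k : ℕ} (h : (Fin k → ℝ) → Set (Fin k → ℝ)) : Prop :=
  ∀ ⦃v u v' u' : Fin k → ℝ⦄, v' ∈ h v → u' ∈ h u → 0 ≤ dotk (v' - u') (v - u)

/-- Maximal monotonicity of a multivalued map `ℝ^k → 2^{ℝ^k}`. -/
def MaxMonotoneE {k : ℕ} (h : (Fin k → ℝ) → Set (Fin k → ℝ)) : Prop :=
  MonotoneE h ∧ ∀ v v' : Fin k → ℝ,
    (∀ u u' : Fin k → ℝ, u' ∈ h u → 0 ≤ dotk (v' - u') (v - u)) → v' ∈ h v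

/-- The class `𝕄(Ω, ℝ^k, q, α, m)` of maximal monotone multifunctions with measurable
resolvents and the two-sided coercivity bound. -/
structure MClassE {n k : ℕ} (Ω : Set (Fin n → ℝ)) (q qs α : ℝ) (m : (Fin n → ℝ) → ℝ)
    (h : (Fin n → ℝ) → (Fin k → ℝ) → Set (Fin k → ℝ)) : Prop where
  /-- `v ↦ h(x,v)` is maximal monotone for a.e. `x ∈ Ω`. -/
  max_mono : ∀ᵐ x ∂(volume.restrict Ω), MaxMonotoneE (h x)
  /-- the resolvent `x ↦ j_λ(x,v)` (the inverse of `v ↦ v + λ h(x,v)`) is measurable. -/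
  resolvent_meas : ∀ lam : ℝ, 0 < lam →
    ∃ j : (Fin n → ℝ) → (Fin k → ℝ) → (Fin k → ℝ),
      (∀ᵐ x ∂(volume.restrict Ω), ∀ v, ∃ w ∈ h x (j x v), j x v + lam • w = v) ∧
      (∀ v, Measurable fun x => j x v)
  /-- `m ∈ L¹(Ω)`. -/
  m_int : Integrable m (volume.restrict Ω)
  /-- coercivity: `α(|v|^q/q + |v*|^{q*}/q*) ≤ (v,v*) + m(x)`. -/
  coercive : ∀ᵐ x ∂(volume.restrict Ω), ∀ v vs, vs ∈ h x v →
      α * (nrmk v ^ q / q + nrmk vs ^ qs / qs) ≤ dotk v vs + m x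

variable {n k : ℕ}

/-- The canonical extension `𝓗` of `h` from `L^q(Ω,ℝ^k)` to `L^{q*}(Ω,ℝ^k)`. -/
def canonExtE (Ω : Set (Fin n → ℝ)) (q qs : ℝ≥0∞)
    (h : (Fin n → ℝ) → (Fin k → ℝ) → Set (Fin k → ℝ))
    (v : Lp (Fin k → ℝ) q (volume.restrict Ω)) :
    Set (Lp (Fin k → ℝ) qs (volume.restrict Ω)) :=
  {w | ∀ᵐ x ∂(volume.restrict Ω), w x ∈ h x (v x)}

/-- The `L^q`–`L^{q*}` duality pairing. -/
noncomputable def pairE (Ω : Set (Fin n → ℝ)) (q qs : ℝ≥0∞)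
    (v : Lp (Fin k → ℝ) q (volume.restrict Ω))
    (w : Lp (Fin k → ℝ) qs (volume.restrict Ω)) : ℝ :=
  ∫ x, dotk (v x) (w x) ∂(volume.restrict Ω)

section basics
variable {k : ℕ}
lemma dotk_comm (a b : Fin k → ℝ) : dotk a b = dotk b a := by simp [dotk, mul_comm]
lemma dotk_sub_left (a b c : Fin k → ℝ) : dotk (a - b) c = dotk a c - dotk b c := by
  simp [dotk, sub_mul, Finset.sum_sub_distrib]
lemma dotk_sub_right (a b c : Fin k → ℝ) : dotk a (b - c) = dotk a b - dotk a c := by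
  simp [dotk, mul_sub, Finset.sum_sub_distrib]
lemma dotk_smul_left (t : ℝ) (a b : Fin k → ℝ) : dotk (t • a) b = t * dotk a b := by
  simp [dotk, Finset.mul_sum, mul_assoc]
lemma dotk_smul_right (t : ℝ) (a b : Fin k → ℝ) : dotk a (t • b) = t * dotk a b := by
  rw [dotk_comm, dotk_smul_left, dotk_comm]
lemma dotk_self_nonneg (a : Fin k → ℝ) : 0 ≤ dotk a a :=
  Finset.sum_nonneg fun i _ => mul_self_nonneg _
lemma nrmk_nonneg (a : Fin k → ℝ) : 0 ≤ nrmk a := Real.sqrt_nonneg _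
lemma nrmk_sq (a : Fin k → ℝ) : nrmk a ^ 2 = dotk a a := Real.sq_sqrt (dotk_self_nonneg a)
lemma eq_zero_of_dotk_self_eq_zero {a : Fin k → ℝ} (h : dotk a a = 0) : a = 0 := by
  have h' := (Finset.sum_eq_zero_iff_of_nonneg (fun i _ => mul_self_nonneg (a i))).mp h
  funext i
  have hi := h' i (Finset.mem_univ i)
  have : a i = 0 := by nlinarith [hi]
  simpa using this

lemma dotk_eq_inner (a b : Fin k → ℝ) :
    dotk a b = inner (𝕜 := ℝ) ((WithLp.equiv 2 (Fin k → ℝ)).symm a)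
      ((WithLp.equiv 2 (Fin k → ℝ)).symm b) := by
  rw [PiLp.inner_apply]; simp [dotk, RCLike.inner_apply, mul_comm]
lemma nrmk_eq_norm (a : Fin k → ℝ) :
    nrmk a = ‖(WithLp.equiv 2 (Fin k → ℝ)).symm a‖ := by
  rw [nrmk, dotk_eq_inner, real_inner_self_eq_norm_sq, Real.sqrt_sq (norm_nonneg _)]
lemma dotk_le_nrmk_mul_nrmk (a b : Fin k → ℝ) : dotk a b ≤ nrmk a * nrmk b := by
  rw [dotk_eq_inner, nrmk_eq_norm, nrmk_eq_norm]; exact real_inner_le_norm _ _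
lemma norm_le_nrmk (a : Fin k → ℝ) : ‖a‖ ≤ nrmk a := by
  rw [pi_norm_le_iff_of_nonneg (nrmk_nonneg a)]
  intro i
  rw [Real.norm_eq_abs, ← Real.sqrt_sq_eq_abs, nrmk]
  apply Real.sqrt_le_sqrt
  have h : (a i)^2 = a i * a i := by ring
  rw [h]
  exact Finset.single_le_sum (f := fun j => a j * a j) (fun j _ => mul_self_nonneg _) (Finset.mem_univ i)
lemma nrmk_le_sqrt_mul_norm (a : Fin k → ℝ) : nrmk a ≤ Real.sqrt k * ‖a‖ := by
  rw [nrmk, ← Real.sqrt_mul_self (norm_nonneg a), ← Real.sqrt_mul (by positivity)]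
  apply Real.sqrt_le_sqrt
  calc dotk a a = ∑ i, a i * a i := rfl
    _ ≤ ∑ _i : Fin k, ‖a‖ * ‖a‖ := by
        apply Finset.sum_le_sum
        intro i _
        have h1 : |a i| ≤ ‖a‖ := by
          rw [← Real.norm_eq_abs]; exact norm_le_pi_norm a i
        nlinarith [abs_nonneg (a i), norm_nonneg a, abs_mul_abs_self (a i)]
    _ = k * (‖a‖ * ‖a‖) := by simp [Finset.sum_const, nsmul_eq_mul]

lemma tendsto_dotk {f g : ℕ → Fin k → ℝ} {a b : Fin k → ℝ}
    (hf : Tendsto f atTop (𝓝 a)) (hg : Tendsto g atTop (𝓝 b)) :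
    Tendsto (fun n => dotk (f n) (g n)) atTop (𝓝 (dotk a b)) := by
  have hfi : ∀ i, Tendsto (fun n => f n i) atTop (𝓝 (a i)) := fun i => (tendsto_pi_nhds.mp hf) i
  have hgi : ∀ i, Tendsto (fun n => g n i) atTop (𝓝 (b i)) := fun i => (tendsto_pi_nhds.mp hg) i
  simpa [dotk] using tendsto_finset_sum Finset.univ (fun i _ => (hfi i).mul (hgi i))
end basics


lemma nrmk_neg (a : Fin k → ℝ) : nrmk (-a) = nrmk a := by
  unfold nrmk dotk
  congr 1
  exact Finset.sum_congr rfl fun i _ => by simp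

lemma nrmk_sub_le (a b : Fin k → ℝ) : nrmk (a - b) ≤ nrmk a + nrmk b := by
  rw [nrmk_eq_norm, nrmk_eq_norm, nrmk_eq_norm]
  have hre : (WithLp.equiv 2 (Fin k → ℝ)).symm (a - b)
      = (WithLp.equiv 2 (Fin k → ℝ)).symm a - (WithLp.equiv 2 (Fin k → ℝ)).symm b := rfl
  rw [hre]
  exact norm_sub_le _ _

lemma abs_dotk_le (a b : Fin k → ℝ) : |dotk a b| ≤ nrmk a * nrmk b := by
  rw [dotk_eq_inner, nrmk_eq_norm, nrmk_eq_norm]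
  exact abs_real_inner_le_norm _ _

section core
variable {k : ℕ}

lemma mem_of_tendsto_graph {A : (Fin k → ℝ) → Set (Fin k → ℝ)} (hA : MaxMonotoneE A)
    {u y : ℕ → Fin k → ℝ} {w v : Fin k → ℝ}
    (hgraph : ∀ n, y n ∈ A (u n)) (hu : Tendsto u atTop (𝓝 w)) (hy : Tendsto y atTop (𝓝 v)) :
    v ∈ A w := by
  apply hA.2
  intro a a' ha'
  have hn : ∀ n, 0 ≤ dotk (y n - a') (u n - a) := fun n => hA.1 (hgraph n) ha'
  have hlim : Tendsto (fun n => dotk (y n - a') (u n - a)) atTop (𝓝 (dotk (v - a') (w - a))) :=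
    tendsto_dotk (hy.sub tendsto_const_nhds) (hu.sub tendsto_const_nhds)
  exact le_of_tendsto_of_tendsto' (tendsto_const_nhds) hlim hn

lemma yosida_converges {A : (Fin k → ℝ) → Set (Fin k → ℝ)} (hA : MonotoneE A)
    {w : Fin k → ℝ} {lam : ℕ → ℝ} {u y : ℕ → Fin k → ℝ}
    (hlam_pos : ∀ n, 0 < lam n) (hlam_anti : Antitone lam)
    (hgraph : ∀ n, y n ∈ A (u n)) (heq : ∀ n, u n = w - lam n • y n)
    {M : ℝ} (hbdd : ∀ n, nrmk (y n) ≤ M) :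
    ∃ v, Tendsto y atTop (𝓝 v) := by
  set β : ℕ → ℝ := fun n => dotk (y n) (y n) with hβ
  have key : ∀ n m, lam n * β n + lam m * β m ≤ (lam n + lam m) * dotk (y n) (y m) := by
    intro n m
    have h0 : 0 ≤ dotk (y n - y m) (u n - u m) := hA (hgraph n) (hgraph m)
    have hd : u n - u m = lam m • y m - lam n • y n := by rw [heq n, heq m]; abel
    rw [hd, dotk_sub_left, dotk_sub_right, dotk_sub_right, dotk_smul_right, dotk_smul_right,
      dotk_smul_right, dotk_smul_right] at h0
    have hc : dotk (y m) (y n) = dotk (y n) (y m) := dotk_comm _ _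
    rw [hc] at h0
    simp only [hβ]
    nlinarith [h0]
  have hmono : Monotone β := by
    apply monotone_nat_of_le_succ
    intro n
    by_contra hlt
    push_neg at hlt
    have hk := key n (n+1)
    have hcs : dotk (y n) (y (n+1)) ≤ nrmk (y n) * nrmk (y (n+1)) := dotk_le_nrmk_mul_nrmk _ _
    have ha2 : nrmk (y n) ^ 2 = β n := nrmk_sq _
    have hb2 : nrmk (y (n+1)) ^ 2 = β (n+1) := nrmk_sq _
    have hlam : lam (n+1) ≤ lam n := hlam_anti (Nat.le_succ n)
    have hba : nrmk (y (n+1)) < nrmk (y n) := by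
      nlinarith [nrmk_nonneg (y n), nrmk_nonneg (y (n+1))]
    have hd : 0 < nrmk (y n) - nrmk (y (n+1)) := sub_pos.mpr hba
    have he : 0 < lam n * nrmk (y n) - lam (n+1) * nrmk (y (n+1)) := by
      nlinarith [mul_pos (hlam_pos (n+1)) hd,
        mul_nonneg (sub_nonneg.mpr hlam) (nrmk_nonneg (y n))]
    have hprod : 0 < (nrmk (y n) - nrmk (y (n+1))) *
        (lam n * nrmk (y n) - lam (n+1) * nrmk (y (n+1))) := mul_pos hd he
    have hsum : 0 ≤ lam n + lam (n+1) := by linarith [hlam_pos n, hlam_pos (n+1)]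
    have h6 := mul_le_mul_of_nonneg_left hcs hsum
    nlinarith [hk, h6, hprod]
  have hβbdd : ∀ n, β n ≤ M^2 := by
    intro n
    have := hbdd n
    have h0 := nrmk_nonneg (y n)
    nlinarith [nrmk_sq (y n)]
  have hβconv : ∃ L, Tendsto β atTop (𝓝 L) :=
    ⟨_, tendsto_atTop_ciSup hmono ⟨M^2, fun x hx => by obtain ⟨n, rfl⟩ := hx; exact hβbdd n⟩⟩
  obtain ⟨L, hL⟩ := hβconv
  have hβcauchy : CauchySeq β := hL.cauchySeq
  have key2 : ∀ n m, n ≤ m → dotk (y n - y m) (y n - y m) ≤ β m - β n := by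
    intro n m hnm
    have hk := key n m
    have hβnm : β n ≤ β m := hmono hnm
    have hlam : lam m ≤ lam n := hlam_anti hnm
    have hdot : β n ≤ dotk (y n) (y m) := by
      have hpos : 0 < lam n + lam m := by linarith [hlam_pos n, hlam_pos m]
      nlinarith [hlam_pos m]
    have hexp : dotk (y n - y m) (y n - y m) = β n + β m - 2 * dotk (y n) (y m) := by
      rw [dotk_sub_left, dotk_sub_right, dotk_sub_right]
      have := dotk_comm (y m) (y n)
      simp only [hβ]
      linarith
    linarith
  have hycauchy : CauchySeq y := by
    rw [Metric.cauchySeq_iff']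
    intro ε hε
    obtain ⟨N, hN⟩ := Metric.cauchySeq_iff'.mp hβcauchy (ε^2) (by positivity)
    refine ⟨N, fun n hn => ?_⟩
    have h1 : dotk (y n - y N) (y n - y N) ≤ β n - β N := by
      have hk2 := key2 N n hn
      have hcm : dotk (y N - y n) (y N - y n) = dotk (y n - y N) (y n - y N) :=
        Finset.sum_congr rfl (fun i _ => by simp [Pi.sub_apply]; ring)
      rw [hcm] at hk2; exact hk2
    have h2 : β n - β N < ε^2 := by
      have := hN n hn
      rw [Real.dist_eq] at this
      have := abs_lt.mp this
      linarith [this.2]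
    have h3 : ‖y n - y N‖ ≤ nrmk (y n - y N) := norm_le_nrmk _
    have h4 : nrmk (y n - y N) ^ 2 ≤ β n - β N := by
      rw [nrmk_sq]; exact h1
    rw [dist_eq_norm]
    have h5 : nrmk (y n - y N) < ε := by nlinarith [nrmk_nonneg (y n - y N)]
    linarith
  exact cauchySeq_tendsto_of_complete hycauchy

lemma bound_of_rpow_le {p c d B t : ℝ} (hp : 1 < p) (hB : 0 < B) (ht : 0 ≤ t) (hc : 0 ≤ c)
    (hineq : B * t ^ p ≤ c * t + d) :
    t ≤ max 1 (((c + max d 0) / B) ^ (1 / (p - 1))) := by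
  rcases le_or_gt t 1 with h1 | h1
  · exact le_max_of_le_left h1
  · have ht0 : 0 < t := by linarith
    have hK : 0 ≤ (c + max d 0) / B := by positivity
    have step1 : t ^ p ≤ ((c + max d 0) / B) * t := by
      rw [div_mul_eq_mul_div, le_div_iff₀ hB]
      have : c * t + d ≤ (c + max d 0) * t := by
        have h2 : d ≤ max d 0 := le_max_left _ _
        have h3 : max d 0 ≤ max d 0 * t := le_mul_of_one_le_right (le_max_right _ _) h1.le
        nlinarith
      calc t ^ p * B = B * t ^ p := by ring
        _ ≤ c * t + d := hineq
        _ ≤ (c + max d 0) * t := this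
    have hteq : t ^ p = t ^ (p - 1) * t := by
      rw [show p = (p - 1) + 1 by ring, Real.rpow_add ht0, Real.rpow_one]
      ring_nf
    have step2 : t ^ (p - 1) ≤ (c + max d 0) / B := by
      rw [hteq] at step1
      exact le_of_mul_le_mul_right step1 ht0
    have step3 : (t ^ (p - 1)) ^ (1 / (p - 1)) ≤ ((c + max d 0) / B) ^ (1 / (p - 1)) :=
      Real.rpow_le_rpow (Real.rpow_nonneg ht _) step2 (one_div_nonneg.mpr (by linarith))
    have step4 : (t ^ (p - 1)) ^ (1 / (p - 1)) = t := by
      rw [← Real.rpow_mul ht]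
      rw [mul_one_div, div_self (by linarith : p - 1 ≠ 0), Real.rpow_one]
    rw [step4] at step3
    exact le_max_of_le_right step3
end core
section meas
variable {k : ℕ} {α : Type*} [MeasurableSpace α]

lemma continuous_dotk : Continuous (fun p : (Fin k → ℝ) × (Fin k → ℝ) => dotk p.1 p.2) := by
  unfold dotk
  exact continuous_finset_sum _ fun i _ =>
    ((continuous_apply i).comp continuous_fst).mul ((continuous_apply i).comp continuous_snd)

lemma continuous_nrmk : Continuous (fun a : Fin k → ℝ => nrmk a) := by
  unfold nrmk
  exact Real.continuous_sqrt.comp (continuous_dotk.comp (continuous_id.prodMk continuous_id))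

lemma aemeasurable_dotk {μ : Measure α} {f g : α → Fin k → ℝ}
    (hf : AEMeasurable f μ) (hg : AEMeasurable g μ) :
    AEMeasurable (fun x => dotk (f x) (g x)) μ :=
  continuous_dotk.measurable.comp_aemeasurable (hf.prodMk hg)

lemma aemeasurable_nrmk {μ : Measure α} {f : α → Fin k → ℝ} (hf : AEMeasurable f μ) :
    AEMeasurable (fun x => nrmk (f x)) μ :=
  continuous_nrmk.measurable.comp_aemeasurable hf

lemma measurable_comp_countable_range
    {j : α → (Fin k → ℝ) → (Fin k → ℝ)} (hj : ∀ c, Measurable fun x => j x c)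
    {s : α → Fin k → ℝ} (hs : Measurable s) (hcount : (Set.range s).Countable) :
    Measurable fun x => j x (s x) := by
  intro t ht
  have heq : (fun x => j x (s x)) ⁻¹' t
      = ⋃ c ∈ Set.range s, (s ⁻¹' {c}) ∩ ((fun x => j x c) ⁻¹' t) := by
    ext x
    simp only [Set.mem_preimage, Set.mem_iUnion, Set.mem_inter_iff, Set.mem_singleton_iff,
      Set.mem_range, exists_prop]
    constructor
    · intro hx
      exact ⟨s x, ⟨x, rfl⟩, rfl, hx⟩
    · rintro ⟨c, _, rfl, hx⟩
      exact hx
  rw [heq]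
  exact MeasurableSet.biUnion hcount fun c _ =>
    (hs (measurableSet_singleton c)).inter (hj c ht)

lemma aemeasurable_j_comp {μ : Measure α}
    {j : α → (Fin k → ℝ) → (Fin k → ℝ)} (hj : ∀ c, Measurable fun x => j x c)
    (hcont : ∀ᵐ x ∂μ, Continuous (j x))
    {g : α → Fin k → ℝ} (hg : AEMeasurable g μ) :
    AEMeasurable (fun x => j x (g x)) μ := by
  have hgm : Measurable (hg.mk g) := hg.measurable_mk
  have hsm : StronglyMeasurable (hg.mk g) := hgm.stronglyMeasurable
  set s : ℕ → SimpleFunc α (Fin k → ℝ) := hsm.approx with hs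
  have htend : ∀ x, Tendsto (fun n => s n x) atTop (𝓝 (hg.mk g x)) := hsm.tendsto_approx
  have hmeas : ∀ n : ℕ, Measurable fun x => j x (s n x) := fun n =>
    measurable_comp_countable_range hj (s n).measurable ((s n).finite_range).countable
  have hmk : AEMeasurable (fun x => j x (hg.mk g x)) μ := by
    apply aemeasurable_of_tendsto_metrizable_ae' (fun n => (hmeas n).aemeasurable)
    filter_upwards [hcont] with x hx
    exact ((hx.tendsto (hg.mk g x))).comp (htend x)
  apply hmk.congr
  filter_upwards [hg.ae_eq_mk] with x hx
  rw [← hx]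

lemma continuous_of_nrmk_contraction {f : (Fin k → ℝ) → (Fin k → ℝ)}
    (H : ∀ a b, nrmk (f a - f b) ≤ nrmk (a - b))
    (Hle : ∀ a : Fin k → ℝ, ‖a‖ ≤ nrmk a) (Hge : ∀ a : Fin k → ℝ, nrmk a ≤ Real.sqrt k * ‖a‖) :
    Continuous f := by
  have : LipschitzWith (Real.toNNReal (Real.sqrt k)) f := by
    apply LipschitzWith.of_dist_le_mul
    intro a b
    rw [dist_eq_norm, dist_eq_norm]
    calc ‖f a - f b‖ ≤ nrmk (f a - f b) := Hle _
      _ ≤ nrmk (a - b) := H a b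
      _ ≤ Real.sqrt k * ‖a - b‖ := Hge _
      _ = (Real.toNNReal (Real.sqrt k) : ℝ) * ‖a - b‖ := by
          rw [Real.coe_toNNReal _ (Real.sqrt_nonneg _)]
  exact this.continuous

end meas

section young

lemma young_eps {q qs : ℝ} (hq : 1 < q) (hqs : 1 < qs) (hconj : 1 / q + 1 / qs = 1)
    {ε : ℝ} (hε : 0 < ε) :
    ∃ C : ℝ, 0 ≤ C ∧ ∀ a b : ℝ, 0 ≤ a → 0 ≤ b → a * b ≤ C * a ^ q + ε * b ^ qs := by
  have hpq : Real.HolderConjugate q qs := Real.holderConjugate_iff.mpr ⟨hq, by rw [← one_div, ← one_div]; exact hconj⟩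
  set t : ℝ := (qs * ε) ^ (-(1 / qs)) with htdef
  have ht0 : 0 < t := Real.rpow_pos_of_pos (by positivity) _
  refine ⟨t ^ q / q, by positivity, fun a b ha hb => ?_⟩
  have key := Real.young_inequality_of_nonneg (mul_nonneg ht0.le ha)
    (div_nonneg hb ht0.le) hpq
  have h1 : t * a * (b / t) = a * b := by field_simp
  have h2 : (t * a) ^ q = t ^ q * a ^ q := Real.mul_rpow ht0.le ha
  have h3 : (b / t) ^ qs = b ^ qs / t ^ qs := Real.div_rpow hb ht0.le qs
  have hqs0 : qs ≠ 0 := by linarith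
  have h4 : t ^ qs = (qs * ε)⁻¹ := by
    rw [htdef, ← Real.rpow_mul (by positivity), show (-(1 / qs)) * qs = -1 by field_simp,
      Real.rpow_neg_one]
  calc a * b = t * a * (b / t) := h1.symm
    _ ≤ (t * a) ^ q / q + (b / t) ^ qs / qs := key
    _ = t ^ q / q * a ^ q + ε * b ^ qs := by
        rw [h2, h3, h4]
        field_simp
end young

section lp
variable {n k : ℕ}

lemma memLp_of_integrable_nrmk_rpow {α : Type*} [MeasurableSpace α] {μ : Measure α} {p : ℝ}
    (hp : 0 < p) {g : α → Fin k → ℝ} (hg : AEMeasurable g μ)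
    (hint : Integrable (fun x => nrmk (g x) ^ p) μ) :
    MemLp g (ENNReal.ofReal p) μ := by
  have hne0 : ENNReal.ofReal p ≠ 0 := by
    simp only [ne_eq, ENNReal.ofReal_eq_zero, not_le]; linarith
  have hnetop : ENNReal.ofReal p ≠ ∞ := ENNReal.ofReal_ne_top
  have htoReal : (ENNReal.ofReal p).toReal = p := ENNReal.toReal_ofReal hp.le
  have hgs : AEStronglyMeasurable g μ := hg.aestronglyMeasurable
  have h1 : Integrable (fun x => ‖g x‖ ^ (ENNReal.ofReal p).toReal) μ := by
    rw [htoReal]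
    apply hint.mono'
    · exact ((Real.continuous_rpow_const hp.le).measurable.comp_aemeasurable
        hgs.norm.aemeasurable).aestronglyMeasurable
    · filter_upwards with x
      rw [Real.norm_eq_abs, abs_of_nonneg (Real.rpow_nonneg (norm_nonneg _) _)]
      exact Real.rpow_le_rpow (norm_nonneg _) (norm_le_nrmk _) hp.le
  have h2 : MemLp (fun x => ‖g x‖ ^ (ENNReal.ofReal p).toReal) 1 μ :=
    memLp_one_iff_integrable.mpr h1
  exact (memLp_norm_rpow_iff hgs hne0 hnetop).mp
    (by rwa [ENNReal.div_self hne0 hnetop])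

lemma integrable_nrmk_rpow_of_memLp {α : Type*} [MeasurableSpace α] {μ : Measure α} {p : ℝ}
    (hp : 0 < p) {g : α → Fin k → ℝ} (hg : MemLp g (ENNReal.ofReal p) μ) :
    Integrable (fun x => nrmk (g x) ^ p) μ := by
  have hne0 : ENNReal.ofReal p ≠ 0 := by
    simp only [ne_eq, ENNReal.ofReal_eq_zero, not_le]; linarith
  have hnetop : ENNReal.ofReal p ≠ ∞ := ENNReal.ofReal_ne_top
  have htoReal : (ENNReal.ofReal p).toReal = p := ENNReal.toReal_ofReal hp.le
  have h1 := hg.integrable_norm_rpow hne0 hnetop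
  rw [htoReal] at h1
  apply (h1.const_mul (Real.sqrt k ^ p)).mono'
  · exact ((Real.continuous_rpow_const hp.le).measurable.comp_aemeasurable
      (aemeasurable_nrmk hg.aestronglyMeasurable.aemeasurable)).aestronglyMeasurable
  · filter_upwards with x
    rw [Real.norm_eq_abs, abs_of_nonneg (Real.rpow_nonneg (nrmk_nonneg _) _)]
    calc nrmk (g x) ^ p ≤ (Real.sqrt k * ‖g x‖) ^ p :=
          Real.rpow_le_rpow (nrmk_nonneg _) (nrmk_le_sqrt_mul_norm _) hp.le
      _ = Real.sqrt k ^ p * ‖g x‖ ^ p := Real.mul_rpow (Real.sqrt_nonneg _) (norm_nonneg _)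

lemma memLp_snd_of_coercive {α : Type*} [MeasurableSpace α] {μ : Measure α} {q qs a : ℝ}
    (hq : 1 < q) (hqs : 1 < qs) (hconj : 1 / q + 1 / qs = 1) (ha : 0 < a)
    {m : α → ℝ} (hm : Integrable m μ)
    {f g : α → Fin k → ℝ}
    (hf : MemLp f (ENNReal.ofReal q) μ) (hg : AEMeasurable g μ)
    (hcoer : ∀ᵐ x ∂μ, a * (nrmk (f x) ^ q / q + nrmk (g x) ^ qs / qs)
      ≤ dotk (f x) (g x) + m x) :
    MemLp g (ENNReal.ofReal qs) μ := by
  obtain ⟨C, hC0, hC⟩ := young_eps hq hqs hconj (ε := a / (2 * qs)) (by positivity)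
  have hfint : Integrable (fun x => nrmk (f x) ^ q) μ :=
    integrable_nrmk_rpow_of_memLp (by linarith) hf
  apply memLp_of_integrable_nrmk_rpow (by linarith : (0:ℝ) < qs) hg
  have hbound : ∀ᵐ x ∂μ, nrmk (g x) ^ qs
      ≤ (2 * qs / a) * (C * nrmk (f x) ^ q + |m x|) := by
    filter_upwards [hcoer] with x hx
    set A := nrmk (f x) ^ q with hA
    set B := nrmk (g x) ^ qs with hB
    have h0A : 0 ≤ A := Real.rpow_nonneg (nrmk_nonneg _) _
    have h0B : 0 ≤ B := Real.rpow_nonneg (nrmk_nonneg _) _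
    have hCS : dotk (f x) (g x) ≤ nrmk (f x) * nrmk (g x) := dotk_le_nrmk_mul_nrmk _ _
    have hY := hC (nrmk (f x)) (nrmk (g x)) (nrmk_nonneg _) (nrmk_nonneg _)
    have hm' : m x ≤ |m x| := le_abs_self _
    have hAq : 0 ≤ a * (A / q) := by positivity
    have e0 : a * (B / qs) = 2 * (a / (2 * qs) * B) := by field_simp
    have e1 : a / (2 * qs) * B ≤ C * A + |m x| := by
      have : a * (A / q) + a * (B / qs) ≤ dotk (f x) (g x) + m x := by
        have := hx; nlinarith [this]
      nlinarith [this, hCS, hY, hAq, hm']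
    have e3 := mul_le_mul_of_nonneg_left e1 (le_of_lt (by positivity : 0 < 2 * qs / a))
    calc B = (2 * qs / a) * (a / (2 * qs) * B) := by field_simp
      _ ≤ (2 * qs / a) * (C * A + |m x|) := e3
  apply Integrable.mono' (((hfint.const_mul C).add hm.abs).const_mul (2 * qs / a))
  · exact ((Real.continuous_rpow_const (by linarith : (0:ℝ) ≤ qs)).measurable.comp_aemeasurable
      (aemeasurable_nrmk hg)).aestronglyMeasurable
  · filter_upwards [hbound] with x hx
    rw [Real.norm_eq_abs, abs_of_nonneg (Real.rpow_nonneg (nrmk_nonneg _) _)]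
    calc nrmk (g x) ^ qs ≤ (2 * qs / a) * (C * nrmk (f x) ^ q + |m x|) := hx
      _ = 2 * qs / a * (C * nrmk (f x) ^ q + |m x|) := by ring
end lp

section resolvent
variable {k : ℕ}

lemma resolvent_mem {A : (Fin k → ℝ) → Set (Fin k → ℝ)} {lam : ℝ} (hlam : 0 < lam)
    {j c : Fin k → ℝ} (hres : ∃ w ∈ A j, j + lam • w = c) : lam⁻¹ • (c - j) ∈ A j := by
  obtain ⟨w, hw, heq⟩ := hres
  have h1 : lam • w = c - j := by rw [← heq]; abel
  have h2 : w = lam⁻¹ • (c - j) := by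
    rw [← h1, smul_smul, inv_mul_cancel₀ hlam.ne', one_smul]
  rwa [← h2]

lemma resolvent_contraction {A : (Fin k → ℝ) → Set (Fin k → ℝ)} (hA : MonotoneE A)
    {lam : ℝ} (hlam : 0 < lam) {j : (Fin k → ℝ) → (Fin k → ℝ)}
    (hres : ∀ c, ∃ w ∈ A (j c), j c + lam • w = c) :
    ∀ a b, nrmk (j a - j b) ≤ nrmk (a - b) := by
  intro a b
  have ha := resolvent_mem hlam (hres a)
  have hb := resolvent_mem hlam (hres b)
  have hm := hA ha hb
  have hexp : lam⁻¹ • (a - j a) - lam⁻¹ • (b - j b)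
      = lam⁻¹ • ((a - b) - (j a - j b)) := by
    rw [← smul_sub]; congr 1; abel
  rw [hexp, dotk_smul_left] at hm
  have hpos : 0 < lam⁻¹ := inv_pos.mpr hlam
  have h3 : 0 ≤ dotk ((a - b) - (j a - j b)) (j a - j b) := nonneg_of_mul_nonneg_right hm hpos
  rw [dotk_sub_left] at h3
  have h4 : dotk (j a - j b) (j a - j b) ≤ dotk (a - b) (j a - j b) := by linarith
  have h5 : dotk (a - b) (j a - j b) ≤ nrmk (a - b) * nrmk (j a - j b) := dotk_le_nrmk_mul_nrmk _ _
  have h6 : nrmk (j a - j b) ^ 2 ≤ nrmk (a - b) * nrmk (j a - j b) := by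
    rw [nrmk_sq]; linarith
  nlinarith [nrmk_nonneg (j a - j b), nrmk_nonneg (a - b)]

lemma resolvent_eq_of_graph {A : (Fin k → ℝ) → Set (Fin k → ℝ)} (hA : MonotoneE A)
    {lam : ℝ} (hlam : 0 < lam) {j : (Fin k → ℝ) → (Fin k → ℝ)}
    (hres : ∀ c, ∃ w ∈ A (j c), j c + lam • w = c)
    {u u' : Fin k → ℝ} (hu : u' ∈ A u) : j (u + lam • u') = u := by
  set c := u + lam • u' with hc
  have hjc := resolvent_mem hlam (hres c)
  have hm := hA hjc hu
  have hexp : lam⁻¹ • (c - j c) - u' = lam⁻¹ • (u - j c) := by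
    rw [hc]
    rw [show u + lam • u' - j c = (u - j c) + lam • u' by abel, smul_add, smul_smul,
      inv_mul_cancel₀ hlam.ne', one_smul]
    abel
  rw [hexp, dotk_smul_left] at hm
  have hpos : 0 < lam⁻¹ := inv_pos.mpr hlam
  have h3 : 0 ≤ dotk (u - j c) (j c - u) := nonneg_of_mul_nonneg_right hm hpos
  have h4 : dotk (u - j c) (j c - u) = -dotk (u - j c) (u - j c) := by
    unfold dotk
    rw [← Finset.sum_neg_distrib]
    exact Finset.sum_congr rfl fun i _ => by simp only [Pi.sub_apply]; ring
  have h5 : dotk (u - j c) (u - j c) = 0 :=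
    le_antisymm (by linarith) (dotk_self_nonneg _)
  have h7 : u - j c = 0 := eq_zero_of_dotk_self_eq_zero h5
  exact (sub_eq_zero.mp h7).symm

end resolvent

section selection
variable {n k : ℕ}

set_option maxHeartbeats 2000000 in
lemma exists_selection_at
    (Ω : Set (Fin n → ℝ)) (q qs a : ℝ) (hq : 1 < q) (hqs : 1 < qs)
    (hconj : 1 / q + 1 / qs = 1) (ha : 0 < a)
    (m : (Fin n → ℝ) → ℝ) (h : (Fin n → ℝ) → (Fin k → ℝ) → Set (Fin k → ℝ))
    (hclass : MClassE Ω q qs a m h)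
    {v : (Fin n → ℝ) → Fin k → ℝ} (hv : AEMeasurable v (volume.restrict Ω)) :
    ∃ g : (Fin n → ℝ) → Fin k → ℝ, AEMeasurable g (volume.restrict Ω) ∧
      ∀ᵐ x ∂(volume.restrict Ω), g x ∈ h x (v x) := by
  set μ := volume.restrict Ω with hμ
  have hres : ∀ nn : ℕ, ∃ j : (Fin n → ℝ) → (Fin k → ℝ) → (Fin k → ℝ),
      (∀ᵐ x ∂μ, ∀ c, ∃ w ∈ h x (j x c), j x c + (1 / ((nn : ℝ) + 1)) • w = c) ∧
      (∀ c, Measurable fun x => j x c) :=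
    fun nn => hclass.resolvent_meas (1 / ((nn : ℝ) + 1)) (by positivity)
  choose J hJae hJmeas using hres
  set lam : ℕ → ℝ := fun nn => 1 / ((nn : ℝ) + 1) with hlamdef
  have hlampos : ∀ nn, 0 < lam nn := fun nn => by positivity
  have hlamanti : Antitone lam := by
    intro i j hij
    apply div_le_div_of_nonneg_left zero_le_one (by positivity)
    linarith [(Nat.cast_le (α := ℝ)).mpr hij]
  have hlam0 : Tendsto lam atTop (𝓝 0) := tendsto_one_div_add_atTop_nhds_zero_nat
  have hG : ∀ᵐ x ∂μ, MaxMonotoneE (h x) ∧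
      (∀ vv vs, vs ∈ h x vv → a * (nrmk vv ^ q / q + nrmk vs ^ qs / qs) ≤ dotk vv vs + m x) ∧
      (∀ nn : ℕ, ∀ c, ∃ w ∈ h x (J nn x c), J nn x c + lam nn • w = c) := by
    filter_upwards [hclass.max_mono, hclass.coercive, ae_all_iff.2 fun nn => hJae nn] with x h1 h2 h3
    exact ⟨h1, h2, h3⟩
  have hcont : ∀ nn : ℕ, ∀ᵐ x ∂μ, Continuous (J nn x) := by
    intro nn
    filter_upwards [hG] with x hx
    exact continuous_of_nrmk_contraction
      (resolvent_contraction hx.1.1 (hlampos nn) (hx.2.2 nn)) norm_le_nrmk nrmk_le_sqrt_mul_norm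
  set y : ℕ → (Fin n → ℝ) → Fin k → ℝ :=
    fun nn x => (lam nn)⁻¹ • (v x - J nn x (v x)) with hydef
  have hymeas : ∀ nn, AEMeasurable (y nn) μ := by
    intro nn
    have h1 : AEMeasurable (fun x => v x - J nn x (v x)) μ :=
      hv.sub (aemeasurable_j_comp (hJmeas nn) (hcont nn) hv)
    exact h1.const_smul ((lam nn)⁻¹)
  -- properties holding a.e.: graph and equation
  have hprop : ∀ᵐ x ∂μ, (∀ nn, y nn x ∈ h x (J nn x (v x)))
      ∧ (∀ nn, J nn x (v x) = v x - lam nn • y nn x)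
      ∧ (∃ M, ∀ nn, nrmk (y nn x) ≤ M) := by
    filter_upwards [hG] with x hx
    have hgraph : ∀ nn, y nn x ∈ h x (J nn x (v x)) := fun nn =>
      resolvent_mem (hlampos nn) (hx.2.2 nn (v x))
    have heq : ∀ nn, J nn x (v x) = v x - lam nn • y nn x := by
      intro nn
      rw [hydef]
      simp only [smul_smul, mul_inv_cancel₀ (hlampos nn).ne', one_smul]
      abel
    refine ⟨hgraph, heq, ?_⟩
    refine ⟨max 1 (((nrmk (v x) + max (m x) 0) / (a / qs)) ^ (1 / (qs - 1))), fun nn => ?_⟩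
    have hco := hx.2.1 _ _ (hgraph nn)
    have hdot : dotk (J nn x (v x)) (y nn x) ≤ nrmk (v x) * nrmk (y nn x) := by
      rw [heq nn, dotk_sub_left, dotk_smul_left]
      have h1 : dotk (v x) (y nn x) ≤ nrmk (v x) * nrmk (y nn x) := dotk_le_nrmk_mul_nrmk _ _
      have h2 : 0 ≤ lam nn * dotk (y nn x) (y nn x) :=
        mul_nonneg (hlampos nn).le (dotk_self_nonneg _)
      linarith
    have h0A : 0 ≤ a * (nrmk (J nn x (v x)) ^ q / q) :=
      mul_nonneg ha.le (div_nonneg (Real.rpow_nonneg (nrmk_nonneg _) _) (by linarith))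
    have hkey : (a / qs) * nrmk (y nn x) ^ qs ≤ nrmk (v x) * nrmk (y nn x) + m x := by
      have e0 : a * (nrmk (y nn x) ^ qs / qs) = (a / qs) * nrmk (y nn x) ^ qs := by ring
      nlinarith [hco, hdot, h0A]
    exact bound_of_rpow_le hqs (div_pos ha (by linarith)) (nrmk_nonneg _)
      (nrmk_nonneg (v x)) hkey
  have hconv : ∀ᵐ x ∂μ, ∃ l, Tendsto (fun nn => y nn x) atTop (𝓝 l) := by
    filter_upwards [hG, hprop] with x hx hp
    obtain ⟨M, hM⟩ := hp.2.2
    exact yosida_converges hx.1.1 hlampos hlamanti hp.1 hp.2.1 hM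
  obtain ⟨g, hgmeas, hgtend⟩ := measurable_limit_of_tendsto_metrizable_ae hymeas hconv
  refine ⟨g, hgmeas.aemeasurable, ?_⟩
  filter_upwards [hG, hprop, hgtend] with x hx hp htx
  have hulim : Tendsto (fun nn => J nn x (v x)) atTop (𝓝 (v x)) := by
    have h1 : Tendsto (fun nn => v x - lam nn • y nn x) atTop (𝓝 (v x - (0:ℝ) • g x)) :=
      tendsto_const_nhds.sub (hlam0.smul htx)
    rw [zero_smul, sub_zero] at h1
    exact h1.congr fun nn => (hp.2.1 nn).symm
  exact mem_of_tendsto_graph hx.1 hp.1 hulim htx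

end selection

section surj
variable {n k : ℕ}

lemma maxMonotoneE_inv {k : ℕ} {A : (Fin k → ℝ) → Set (Fin k → ℝ)} (hA : MaxMonotoneE A) :
    MaxMonotoneE (fun u => {z | u ∈ A z}) := by
  constructor
  · intro v u v' u' hv' hu'
    have h1 := hA.1 hv' hu'
    rw [dotk_comm]
    exact h1
  · intro vv vv' hyp
    show vv ∈ A vv'
    apply hA.2
    intro uu uu' huu'
    have h1 := hyp uu' uu huu'
    rw [dotk_comm]
    exact h1

set_option maxHeartbeats 1000000 in
lemma exists_preimage_at
    (Ω : Set (Fin n → ℝ)) (q qs a : ℝ) (hq : 1 < q) (hqs : 1 < qs)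
    (hconj : 1 / q + 1 / qs = 1) (ha : 0 < a)
    (m : (Fin n → ℝ) → ℝ) (h : (Fin n → ℝ) → (Fin k → ℝ) → Set (Fin k → ℝ))
    (hclass : MClassE Ω q qs a m h)
    {w : (Fin n → ℝ) → Fin k → ℝ} (hw : AEMeasurable w (volume.restrict Ω)) :
    ∃ g : (Fin n → ℝ) → Fin k → ℝ, AEMeasurable g (volume.restrict Ω) ∧
      ∀ᵐ x ∂(volume.restrict Ω), w x ∈ h x (g x) := by
  set μ := volume.restrict Ω with hμ
  have hres : ∀ nn : ℕ, ∃ j : (Fin n → ℝ) → (Fin k → ℝ) → (Fin k → ℝ),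
      (∀ᵐ x ∂μ, ∀ c, ∃ z ∈ h x (j x c), j x c + ((nn : ℝ) + 1) • z = c) ∧
      (∀ c, Measurable fun x => j x c) :=
    fun nn => hclass.resolvent_meas ((nn : ℝ) + 1) (by positivity)
  choose J hJae hJmeas using hres
  set mu : ℕ → ℝ := fun nn => ((nn : ℝ) + 1)⁻¹ with hmudef
  have hmupos : ∀ nn, 0 < mu nn := fun nn => by positivity
  have hmuanti : Antitone mu := by
    intro i j hij
    apply inv_anti₀ (by positivity)
    linarith [(Nat.cast_le (α := ℝ)).mpr hij]
  have hmu0 : Tendsto mu atTop (𝓝 0) := by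
    have := tendsto_one_div_add_atTop_nhds_zero_nat (𝕜 := ℝ)
    simpa [one_div] using this
  have hG : ∀ᵐ x ∂μ, MaxMonotoneE (h x) ∧
      (∀ vv vs, vs ∈ h x vv → a * (nrmk vv ^ q / q + nrmk vs ^ qs / qs) ≤ dotk vv vs + m x) ∧
      (∀ nn : ℕ, ∀ c, ∃ z ∈ h x (J nn x c), J nn x c + ((nn : ℝ) + 1) • z = c) := by
    filter_upwards [hclass.max_mono, hclass.coercive, ae_all_iff.2 fun nn => hJae nn] with x h1 h2 h3
    exact ⟨h1, h2, h3⟩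
  have hcont : ∀ nn : ℕ, ∀ᵐ x ∂μ, Continuous (J nn x) := by
    intro nn
    filter_upwards [hG] with x hx
    exact continuous_of_nrmk_contraction
      (resolvent_contraction hx.1.1 (by positivity : (0:ℝ) < (nn : ℝ) + 1) (hx.2.2 nn))
      norm_le_nrmk nrmk_le_sqrt_mul_norm
  set y : ℕ → (Fin n → ℝ) → Fin k → ℝ :=
    fun nn x => J nn x (((nn : ℝ) + 1) • w x) with hydef
  have hymeas : ∀ nn, AEMeasurable (y nn) μ := by
    intro nn
    exact aemeasurable_j_comp (hJmeas nn) (hcont nn) (hw.const_smul (((nn : ℝ) + 1)))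
  have hprop : ∀ᵐ x ∂μ, (∀ nn, w x - mu nn • y nn x ∈ h x (y nn x))
      ∧ (∃ M, ∀ nn, nrmk (y nn x) ≤ M) := by
    filter_upwards [hG] with x hx
    have hgraph : ∀ nn, w x - mu nn • y nn x ∈ h x (y nn x) := by
      intro nn
      have h1 := resolvent_mem (by positivity : (0:ℝ) < (nn : ℝ) + 1)
        (hx.2.2 nn (((nn : ℝ) + 1) • w x))
      have h2 : ((nn : ℝ) + 1)⁻¹ • (((nn : ℝ) + 1) • w x - y nn x)
          = w x - mu nn • y nn x := by
        rw [smul_sub, smul_smul, inv_mul_cancel₀ (by positivity : ((nn : ℝ) + 1) ≠ 0), one_smul]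
      rw [h2] at h1
      exact h1
    refine ⟨hgraph, ?_⟩
    refine ⟨max 1 (((nrmk (w x) + max (m x) 0) / (a / q)) ^ (1 / (q - 1))), fun nn => ?_⟩
    have hco := hx.2.1 _ _ (hgraph nn)
    have hdot : dotk (y nn x) (w x - mu nn • y nn x) ≤ nrmk (w x) * nrmk (y nn x) := by
      rw [dotk_sub_right, dotk_smul_right]
      have h1 : dotk (y nn x) (w x) ≤ nrmk (y nn x) * nrmk (w x) := dotk_le_nrmk_mul_nrmk _ _
      have h2 : 0 ≤ mu nn * dotk (y nn x) (y nn x) :=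
        mul_nonneg (hmupos nn).le (dotk_self_nonneg _)
      nlinarith [h1, h2]
    have h0A : 0 ≤ a * (nrmk (w x - mu nn • y nn x) ^ qs / qs) :=
      mul_nonneg ha.le (div_nonneg (Real.rpow_nonneg (nrmk_nonneg _) _) (by linarith))
    have hkey : (a / q) * nrmk (y nn x) ^ q ≤ nrmk (w x) * nrmk (y nn x) + m x := by
      have e0 : a * (nrmk (y nn x) ^ q / q) = (a / q) * nrmk (y nn x) ^ q := by ring
      nlinarith [hco, hdot, h0A, e0]
    exact bound_of_rpow_le hq (div_pos ha (by linarith)) (nrmk_nonneg _)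
      (nrmk_nonneg (w x)) hkey
  have hconv : ∀ᵐ x ∂μ, ∃ l, Tendsto (fun nn => y nn x) atTop (𝓝 l) := by
    filter_upwards [hG, hprop] with x hx hp
    obtain ⟨M, hM⟩ := hp.2
    have hAinv : MonotoneE (fun u => {z | u ∈ h x z}) := (maxMonotoneE_inv hx.1).1
    exact yosida_converges hAinv hmupos hmuanti
      (u := fun nn => w x - mu nn • y nn x)
      (fun nn => hp.1 nn) (fun nn => rfl) hM
  obtain ⟨g, hgmeas, hgtend⟩ := measurable_limit_of_tendsto_metrizable_ae hymeas hconv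
  refine ⟨g, hgmeas.aemeasurable, ?_⟩
  filter_upwards [hG, hprop, hgtend] with x hx hp htx
  have hulim : Tendsto (fun nn => w x - mu nn • y nn x) atTop (𝓝 (w x)) := by
    have h1 : Tendsto (fun nn => w x - mu nn • y nn x) atTop (𝓝 (w x - (0:ℝ) • g x)) :=
      tendsto_const_nhds.sub (hmu0.smul htx)
    rwa [zero_smul, sub_zero] at h1
  exact mem_of_tendsto_graph (maxMonotoneE_inv hx.1) (fun nn => hp.1 nn) hulim htx

end surj


/-- For `h ∈ 𝕄(Ω, ℝ^k, q, α, m)` the canonical extension `𝓗` from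
`L^q(Ω,ℝ^k)` to `L^{q*}(Ω,ℝ^k)` is maximal monotone, surjective, and has effective domain
`D(𝓗) = L^q(Ω,ℝ^k)`. -/
theorem canonExt_of_MClass_maxMonotone_surjective
    (Ω : Set (Fin n → ℝ)) (hΩ : MeasurableSet Ω)
    (q qs α : ℝ) (hq : 1 < q) (hqs : 1 < qs) (hconj : 1 / q + 1 / qs = 1) (hα : 0 < α)
    (m : (Fin n → ℝ) → ℝ)
    (h : (Fin n → ℝ) → (Fin k → ℝ) → Set (Fin k → ℝ))
    (hclass : MClassE Ω q qs α m h) :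
    -- 𝓗 is monotone
    (∀ (v u : Lp (Fin k → ℝ) (ENNReal.ofReal q) (volume.restrict Ω))
       (v' u' : Lp (Fin k → ℝ) (ENNReal.ofReal qs) (volume.restrict Ω)),
        v' ∈ canonExtE Ω (ENNReal.ofReal q) (ENNReal.ofReal qs) h v →
        u' ∈ canonExtE Ω (ENNReal.ofReal q) (ENNReal.ofReal qs) h u →
        0 ≤ pairE Ω (ENNReal.ofReal q) (ENNReal.ofReal qs) (v - u) (v' - u')) ∧
    -- 𝓗 is maximal monotone
    (∀ (v : Lp (Fin k → ℝ) (ENNReal.ofReal q) (volume.restrict Ω))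
       (v' : Lp (Fin k → ℝ) (ENNReal.ofReal qs) (volume.restrict Ω)),
        (∀ u u', u' ∈ canonExtE Ω (ENNReal.ofReal q) (ENNReal.ofReal qs) h u →
          0 ≤ pairE Ω (ENNReal.ofReal q) (ENNReal.ofReal qs) (v - u) (v' - u')) →
        v' ∈ canonExtE Ω (ENNReal.ofReal q) (ENNReal.ofReal qs) h v) ∧
    -- 𝓗 is surjective
    (∀ w : Lp (Fin k → ℝ) (ENNReal.ofReal qs) (volume.restrict Ω),
        ∃ v, w ∈ canonExtE Ω (ENNReal.ofReal q) (ENNReal.ofReal qs) h v) ∧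
    -- D(𝓗) = L^q(Ω, ℝ^k)
    (∀ v : Lp (Fin k → ℝ) (ENNReal.ofReal q) (volume.restrict Ω),
        (canonExtE Ω (ENNReal.ofReal q) (ENNReal.ofReal qs) h v).Nonempty) := by
  have hmono : ∀ (v u : Lp (Fin k → ℝ) (ENNReal.ofReal q) (volume.restrict Ω))
       (v' u' : Lp (Fin k → ℝ) (ENNReal.ofReal qs) (volume.restrict Ω)),
        v' ∈ canonExtE Ω (ENNReal.ofReal q) (ENNReal.ofReal qs) h v →
        u' ∈ canonExtE Ω (ENNReal.ofReal q) (ENNReal.ofReal qs) h u →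
        0 ≤ pairE Ω (ENNReal.ofReal q) (ENNReal.ofReal qs) (v - u) (v' - u') := by
    intro v u v' u' hv' hu'
    have h1 : ∀ᵐ x ∂(volume.restrict Ω), 0 ≤ dotk ((v - u) x) ((v' - u') x) := by
      filter_upwards [hclass.max_mono, hv', hu', Lp.coeFn_sub v u, Lp.coeFn_sub v' u']
        with x hmm hv'x hu'x hsub hsub'
      rw [hsub, hsub', Pi.sub_apply, Pi.sub_apply, dotk_comm]
      exact hmm.1 hv'x hu'x
    simp only [pairE]
    exact integral_nonneg_of_ae h1
  have hdom : ∀ v : Lp (Fin k → ℝ) (ENNReal.ofReal q) (volume.restrict Ω),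
      (canonExtE Ω (ENNReal.ofReal q) (ENNReal.ofReal qs) h v).Nonempty := by
    intro v
    obtain ⟨g, hgmeas, hgsel⟩ := exists_selection_at Ω q qs α hq hqs hconj hα m h hclass
      (Lp.memLp v).aestronglyMeasurable.aemeasurable
    have hgmem : MemLp g (ENNReal.ofReal qs) (volume.restrict Ω) := by
      apply memLp_snd_of_coercive hq hqs hconj hα hclass.m_int (Lp.memLp v) hgmeas
      filter_upwards [hclass.coercive, hgsel] with x hco hins
      exact hco _ _ hins
    refine ⟨hgmem.toLp g, ?_⟩
    show ∀ᵐ x ∂(volume.restrict Ω), (hgmem.toLp g) x ∈ h x (v x)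
    filter_upwards [hgmem.coeFn_toLp, hgsel] with x h1 h2
    rw [h1]; exact h2
  have hsurj : ∀ w : Lp (Fin k → ℝ) (ENNReal.ofReal qs) (volume.restrict Ω),
      ∃ v, w ∈ canonExtE Ω (ENNReal.ofReal q) (ENNReal.ofReal qs) h v := by
    intro w
    obtain ⟨g, hgmeas, hgsel⟩ := exists_preimage_at Ω q qs α hq hqs hconj hα m h hclass
      (Lp.memLp w).aestronglyMeasurable.aemeasurable
    have hgmem : MemLp g (ENNReal.ofReal q) (volume.restrict Ω) := by
      apply memLp_snd_of_coercive hqs hq (by linarith) hα hclass.m_int (Lp.memLp w) hgmeas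
      filter_upwards [hclass.coercive, hgsel] with x hco hins
      have := hco _ _ hins
      rw [dotk_comm] at this
      linarith [this]
    refine ⟨hgmem.toLp g, ?_⟩
    show ∀ᵐ x ∂(volume.restrict Ω), w x ∈ h x ((hgmem.toLp g) x)
    filter_upwards [hgmem.coeFn_toLp, hgsel] with x h1 h2
    rw [h1]; exact h2
  refine ⟨hmono, ?_, hsurj, hdom⟩
  intro v v' hyp
  show ∀ᵐ x ∂(volume.restrict Ω), v' x ∈ h x (v x)
  by_contra hbad
  classical
  obtain ⟨J, hJae, hJmeas⟩ := hclass.resolvent_meas 1 one_pos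
  obtain ⟨ψ, hψmeas, hψsel⟩ := exists_selection_at Ω q qs α hq hqs hconj hα m h hclass
    (Lp.memLp v).aestronglyMeasurable.aemeasurable
  have hψmem : MemLp ψ (ENNReal.ofReal qs) (volume.restrict Ω) := by
    apply memLp_snd_of_coercive hq hqs hconj hα hclass.m_int (Lp.memLp v) hψmeas
    filter_upwards [hclass.coercive, hψsel] with x hco hins
    exact hco _ _ hins
  -- measurable representatives
  have hvA : AEMeasurable (⇑v) (volume.restrict Ω) := (Lp.memLp v).aestronglyMeasurable.aemeasurable
  have hv'A : AEMeasurable (⇑v') (volume.restrict Ω) := (Lp.memLp v').aestronglyMeasurable.aemeasurable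
  have hmA : AEMeasurable m (volume.restrict Ω) := hclass.m_int.aestronglyMeasurable.aemeasurable
  set vm := hvA.mk (⇑v) with hvmdef
  set v'm := hv'A.mk (⇑v') with hv'mdef
  set ψm := hψmeas.mk ψ with hψmdef
  set mm := hmA.mk m with hmmdef
  have hvm_meas : Measurable vm := hvA.measurable_mk
  have hv'm_meas : Measurable v'm := hv'A.measurable_mk
  have hψm_meas : Measurable ψm := hψmeas.measurable_mk
  have hmm_meas : Measurable mm := hmA.measurable_mk
  -- dense sequence
  set c : ℕ → Fin k → ℝ := TopologicalSpace.denseSeq (Fin k → ℝ) with hcdef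
  set D : ℕ → (Fin n → ℝ) → ℝ :=
    fun i x => dotk (v'm x - (c i - J x (c i))) (vm x - J x (c i)) with hDdef
  have hDmeas : ∀ i, Measurable (D i) := by
    intro i
    have hJc : Measurable fun x => J x (c i) := hJmeas (c i)
    exact continuous_dotk.measurable.comp
      ((hv'm_meas.sub (measurable_const.sub hJc)).prodMk (hvm_meas.sub hJc))
  -- the good a.e. properties
  set P : (Fin n → ℝ) → Prop := fun x =>
    MaxMonotoneE (h x) ∧
    (∀ vv vs, vs ∈ h x vv → α * (nrmk vv ^ q / q + nrmk vs ^ qs / qs) ≤ dotk vv vs + m x) ∧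
    (∀ cc, ∃ w ∈ h x (J x cc), J x cc + (1:ℝ) • w = cc) ∧
    v x = vm x ∧ v' x = v'm x ∧ ψ x = ψm x ∧ m x = mm x ∧ ψ x ∈ h x (v x) with hPdef
  have hPae : ∀ᵐ x ∂(volume.restrict Ω), P x := by
    filter_upwards [hclass.max_mono, hclass.coercive, hJae, hvA.ae_eq_mk, hv'A.ae_eq_mk,
      hψmeas.ae_eq_mk, hmA.ae_eq_mk, hψsel] with x h1 h2 h3 h4 h5 h6 h7 h8
    exact ⟨h1, h2, h3, h4, h5, h6, h7, h8⟩
  obtain ⟨G, hGmeas, hGcompl, hGprop⟩ :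
      ∃ G, MeasurableSet G ∧ (volume.restrict Ω) Gᶜ = 0 ∧ ∀ x ∈ G, P x := by
    have hN : (volume.restrict Ω) {x | ¬ P x} = 0 := ae_iff.mp hPae
    refine ⟨(toMeasurable (volume.restrict Ω) {x | ¬ P x})ᶜ, (measurableSet_toMeasurable (volume.restrict Ω) _).compl, ?_, ?_⟩
    · rw [compl_compl, measure_toMeasurable]; exact hN
    · intro x hx
      by_contra hnx
      exact hx (subset_toMeasurable (volume.restrict Ω) _ hnx)
  -- graph points from the resolvent, and continuity
  have hjgraph : ∀ x ∈ G, ∀ cc, cc - J x cc ∈ h x (J x cc) := by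
    intro x hx cc
    have h1 := resolvent_mem one_pos ((hGprop x hx).2.2.1 cc)
    rwa [inv_one, one_smul] at h1
  have hJcont : ∀ x ∈ G, Continuous (J x) := by
    intro x hx
    exact continuous_of_nrmk_contraction
      (resolvent_contraction (hGprop x hx).1.1 one_pos (hGprop x hx).2.2.1)
      norm_le_nrmk nrmk_le_sqrt_mul_norm
  -- the bad set and its covering
  set T : Set (Fin n → ℝ) := {x | ¬ (v' x ∈ h x (v x))} with hTdef
  have hTne : (volume.restrict Ω) T ≠ 0 := by
    intro h0
    rw [hTdef] at h0
    exact hbad (ae_iff.mpr h0)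
  set AiR : ℕ → ℕ → Set (Fin n → ℝ) := fun i R =>
    G ∩ ({x | D i x < 0} ∩
      {x | |mm x| ≤ R ∧ nrmk (vm x) ≤ R ∧ nrmk (v'm x) ≤ R ∧ nrmk (ψm x) ≤ R}) with hAiRdef
  have hAiRmeas : ∀ i R, MeasurableSet (AiR i R) := by
    intro i R
    apply hGmeas.inter
    apply MeasurableSet.inter
    · exact measurableSet_lt (hDmeas i) measurable_const
    · refine MeasurableSet.inter (hmm_meas.abs measurableSet_Iic) ?_
      refine MeasurableSet.inter ((continuous_nrmk.measurable.comp hvm_meas) measurableSet_Iic) ?_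
      exact MeasurableSet.inter ((continuous_nrmk.measurable.comp hv'm_meas) measurableSet_Iic)
        ((continuous_nrmk.measurable.comp hψm_meas) measurableSet_Iic)
  have hcover : T ∩ G ⊆ ⋃ i, ⋃ R : ℕ, AiR i R := by
    rintro x ⟨hxT, hxG⟩
    have hP := hGprop x hxG
    -- find i with D i x < 0
    have hex_i : ∃ i, D i x < 0 := by
      have hnm : ¬ (v' x ∈ h x (v x)) := hxT
      have hcontra := mt (hP.1.2 (v x) (v' x)) hnm
      push_neg at hcontra
      obtain ⟨u, u', hu', hlt⟩ := hcontra
      have hju : J x (u + u') = u := by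
        have h1 := resolvent_eq_of_graph hP.1.1 one_pos hP.2.2.1 hu'
        rwa [one_smul] at h1
      have hFcont : Continuous (fun cc => dotk (v'm x - (cc - J x cc)) (vm x - J x cc)) := by
        have hc1 : Continuous fun cc : Fin k → ℝ =>
            (v'm x - (cc - J x cc), vm x - J x cc) :=
          (continuous_const.sub (continuous_id.sub (hJcont x hxG))).prodMk
            (continuous_const.sub (hJcont x hxG))
        exact continuous_dotk.comp hc1
      have hO : IsOpen {cc | dotk (v'm x - (cc - J x cc)) (vm x - J x cc) < 0} :=
        isOpen_lt hFcont continuous_const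
      have hne : {cc | dotk (v'm x - (cc - J x cc)) (vm x - J x cc) < 0}.Nonempty := by
        refine ⟨u + u', ?_⟩
        show dotk (v'm x - ((u + u') - J x (u + u'))) (vm x - J x (u + u')) < 0
        rw [hju, show u + u' - u = u' by abel, ← hP.2.2.2.1, ← hP.2.2.2.2.1]
        exact hlt
      obtain ⟨i, hi⟩ := (TopologicalSpace.denseRange_denseSeq _).exists_mem_open hO hne
      exact ⟨i, hi⟩
    obtain ⟨i, hi⟩ := hex_i
    obtain ⟨R, hR⟩ := exists_nat_ge
      (max |mm x| (max (nrmk (vm x)) (max (nrmk (v'm x)) (nrmk (ψm x)))))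
    refine Set.mem_iUnion.mpr ⟨i, Set.mem_iUnion.mpr ⟨R, hxG, hi, ?_, ?_, ?_, ?_⟩⟩
    · exact le_trans (le_max_left _ _) hR
    · exact le_trans (le_trans (le_max_left _ _) (le_max_right _ _)) hR
    · exact le_trans (le_trans (le_trans (le_max_left _ _) (le_max_right _ _)) (le_max_right _ _)) hR
    · exact le_trans (le_trans (le_trans (le_max_right _ _) (le_max_right _ _)) (le_max_right _ _)) hR
  have hTG : (volume.restrict Ω) (T ∩ G) ≠ 0 := by
    intro h0
    apply hTne
    have h1 : (volume.restrict Ω) T ≤ (volume.restrict Ω) (T ∩ G) + (volume.restrict Ω) Gᶜ := by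
      calc (volume.restrict Ω) T ≤ (volume.restrict Ω) ((T ∩ G) ∪ Gᶜ) := by
            apply measure_mono
            intro x hx
            by_cases hG : x ∈ G
            · exact Or.inl ⟨hx, hG⟩
            · exact Or.inr hG
        _ ≤ (volume.restrict Ω) (T ∩ G) + (volume.restrict Ω) Gᶜ := measure_union_le _ _
    rw [h0, hGcompl, add_zero] at h1
    exact le_antisymm h1 (by simp)
  have hex : ∃ i R, (volume.restrict Ω) (AiR i R) ≠ 0 := by
    by_contra hno
    push_neg at hno
    apply hTG
    apply measure_mono_null hcover
    exact measure_iUnion_null fun i => measure_iUnion_null fun R => hno i R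
  obtain ⟨i, R, hiR⟩ := hex
  obtain ⟨S, hSmeas, hSsub, hSpos, hSfin⟩ :=
    Measure.exists_subset_measure_lt_top (hAiRmeas i R) (zero_lt_iff.mpr hiR)
  -- uniform bound for J x (c i) on S
  set MJ : ℝ := max 1 (((nrmk (c i) + max (R:ℝ) 0) / (α / q)) ^ (1 / (q - 1))) with hMJdef
  have hMJ1 : 1 ≤ MJ := le_max_left _ _
  have hMJbd : ∀ x ∈ S, nrmk (J x (c i)) ≤ MJ := by
    intro x hxS
    have hxA := hSsub hxS
    have hxG : x ∈ G := hxA.1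
    have hP := hGprop x hxG
    have hgr := hjgraph x hxG (c i)
    have hco := hP.2.1 _ _ hgr
    have hmbd : m x ≤ (R:ℝ) := by
      rw [hP.2.2.2.2.2.2.1]
      exact le_trans (le_abs_self _) hxA.2.2.1
    have hdot : dotk (J x (c i)) (c i - J x (c i)) ≤ nrmk (c i) * nrmk (J x (c i)) := by
      rw [dotk_sub_right]
      have h1 : dotk (J x (c i)) (c i) ≤ nrmk (J x (c i)) * nrmk (c i) := dotk_le_nrmk_mul_nrmk _ _
      have h2 : 0 ≤ dotk (J x (c i)) (J x (c i)) := dotk_self_nonneg _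
      nlinarith [h1, h2]
    have h0B : 0 ≤ α * (nrmk (c i - J x (c i)) ^ qs / qs) :=
      mul_nonneg hα.le (div_nonneg (Real.rpow_nonneg (nrmk_nonneg _) _) (by linarith))
    have hkey : (α / q) * nrmk (J x (c i)) ^ q ≤ nrmk (c i) * nrmk (J x (c i)) + (R:ℝ) := by
      have e0 : α * (nrmk (J x (c i)) ^ q / q) = (α / q) * nrmk (J x (c i)) ^ q := by ring
      nlinarith [hco, hdot, h0B, hmbd, e0]
    exact bound_of_rpow_le hq (div_pos hα (by linarith)) (nrmk_nonneg _) (nrmk_nonneg (c i)) hkey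
  -- the competitor pair
  set U : (Fin n → ℝ) → Fin k → ℝ := S.piecewise (fun x => J x (c i)) vm with hUdef
  set U' : (Fin n → ℝ) → Fin k → ℝ := S.piecewise (fun x => c i - J x (c i)) ψm with hU'def
  have hU_meas : Measurable U := Measurable.piecewise hSmeas (hJmeas (c i)) hvm_meas
  have hU'_meas : Measurable U' :=
    Measurable.piecewise hSmeas (measurable_const.sub (hJmeas (c i))) hψm_meas
  have hvm_mem : MemLp vm (ENNReal.ofReal q) (volume.restrict Ω) := (memLp_congr_ae hvA.ae_eq_mk).mp (Lp.memLp v)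
  have hψm_mem : MemLp ψm (ENNReal.ofReal qs) (volume.restrict Ω) := (memLp_congr_ae hψmeas.ae_eq_mk).mp hψmem
  set K0 : ℝ := MJ + nrmk (c i) + R with hK0def
  have hK0nonneg : 0 ≤ K0 := by
    have := nrmk_nonneg (c i)
    have : (0:ℝ) ≤ R := Nat.cast_nonneg R
    have := hMJ1
    rw [hK0def]
    linarith [nrmk_nonneg (c i)]
  -- MemLp of piecewise perturbations
  have hindic : ∀ (p : ℝ≥0∞) (f base : (Fin n → ℝ) → Fin k → ℝ), Measurable f →
      Measurable base → MemLp base p (volume.restrict Ω) → (∀ x ∈ S, nrmk (f x - base x) ≤ K0) →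
      MemLp (S.piecewise f base) p (volume.restrict Ω) := by
    intro p f base hf hbase hbasemem hbd
    have heq : S.piecewise f base = fun x => base x + S.indicator (fun y => f y - base y) x := by
      funext x
      by_cases hxS : x ∈ S <;> simp [Set.piecewise, Set.indicator, hxS]
    rw [heq]
    apply hbasemem.add
    apply MemLp.of_le (memLp_indicator_const p hSmeas (K0 : ℝ) (Or.inr hSfin.ne))
    · exact ((hf.sub hbase).indicator hSmeas).aestronglyMeasurable
    · filter_upwards with x
      by_cases hxS : x ∈ S
      · simp only [Set.indicator_of_mem hxS]
        rw [Real.norm_eq_abs, abs_of_nonneg hK0nonneg]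
        exact le_trans (norm_le_nrmk _) (hbd x hxS)
      · simp [Set.indicator_of_notMem hxS]
  have hU_mem : MemLp U (ENNReal.ofReal q) (volume.restrict Ω) := by
    apply hindic _ _ _ (hJmeas (c i)) hvm_meas hvm_mem
    intro x hxS
    have h1 := nrmk_sub_le (J x (c i)) (vm x)
    have h2 := hMJbd x hxS
    have h3 : nrmk (vm x) ≤ R := (hSsub hxS).2.2.2.1
    rw [hK0def]
    linarith [nrmk_nonneg (c i)]
  have hU'_mem : MemLp U' (ENNReal.ofReal qs) (volume.restrict Ω) := by
    apply hindic _ _ _ (measurable_const.sub (hJmeas (c i))) hψm_meas hψm_mem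
    intro x hxS
    have h1 := nrmk_sub_le (c i - J x (c i)) (ψm x)
    have h2 := nrmk_sub_le (c i) (J x (c i))
    have h3 := hMJbd x hxS
    have h4 : nrmk (ψm x) ≤ R := (hSsub hxS).2.2.2.2.2
    show nrmk (c i - J x (c i) - ψm x) ≤ K0
    rw [hK0def]
    linarith
  set UL := hU_mem.toLp U with hULdef
  set UL' := hU'_mem.toLp U' with hUL'def
  have hULmem : UL' ∈ canonExtE Ω (ENNReal.ofReal q) (ENNReal.ofReal qs) h UL := by
    show ∀ᵐ x ∂(volume.restrict Ω), UL' x ∈ h x (UL x)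
    filter_upwards [hU_mem.coeFn_toLp, hU'_mem.coeFn_toLp, hPae] with x e1 e2 hP
    rw [e1, e2]
    by_cases hxS : x ∈ S
    · rw [hUdef, hU'def, Set.piecewise_eq_of_mem _ _ _ hxS, Set.piecewise_eq_of_mem _ _ _ hxS]
      have h1 := resolvent_mem one_pos (hP.2.2.1 (c i))
      rwa [inv_one, one_smul] at h1
    · rw [hUdef, hU'def, Set.piecewise_eq_of_notMem _ _ _ hxS,
        Set.piecewise_eq_of_notMem _ _ _ hxS]
      rw [← hP.2.2.2.2.2.1, ← hP.2.2.2.1]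
      exact hP.2.2.2.2.2.2.2
  have hpair := hyp UL UL' hULmem
  -- rewrite the pairing as an integral of a nonpositive function
  set F : (Fin n → ℝ) → ℝ :=
    fun x => dotk (vm x - J x (c i)) (v'm x - (c i - J x (c i))) with hFdef
  set f0 : (Fin n → ℝ) → ℝ := S.indicator F with hf0def
  have hae : (fun x => dotk ((v - UL) x) ((v' - UL') x)) =ᵐ[(volume.restrict Ω)] f0 := by
    filter_upwards [Lp.coeFn_sub v UL, Lp.coeFn_sub v' UL', hU_mem.coeFn_toLp,
      hU'_mem.coeFn_toLp, hPae] with x e1 e2 e3 e4 hP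
    rw [e1, e2, Pi.sub_apply, Pi.sub_apply, e3, e4, hP.2.2.2.1, hP.2.2.2.2.1]
    by_cases hxS : x ∈ S
    · rw [hf0def, Set.indicator_of_mem hxS, hFdef, hUdef, hU'def,
        Set.piecewise_eq_of_mem _ _ _ hxS, Set.piecewise_eq_of_mem _ _ _ hxS]
    · rw [hf0def, Set.indicator_of_notMem hxS, hUdef, hU'def,
        Set.piecewise_eq_of_notMem _ _ _ hxS, Set.piecewise_eq_of_notMem _ _ _ hxS,
        sub_self]
      simp [dotk]
  have hpair' : 0 ≤ ∫ x, f0 x ∂(volume.restrict Ω) := by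
    have : pairE Ω (ENNReal.ofReal q) (ENNReal.ofReal qs) (v - UL) (v' - UL')
        = ∫ x, f0 x ∂(volume.restrict Ω) := by
      simp only [pairE]
      exact integral_congr_ae hae
    rw [← this]
    exact hpair
  have hintf0 : Integrable f0 (volume.restrict Ω) := by
    have hFmeas : Measurable F := by
      have hJc : Measurable fun x => J x (c i) := hJmeas (c i)
      exact continuous_dotk.measurable.comp
        ((hvm_meas.sub hJc).prodMk (hv'm_meas.sub (measurable_const.sub hJc)))
    apply Integrable.mono' ((integrable_indicator_iff hSmeas).mpr
      (integrableOn_const hSfin.ne) :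
        Integrable (S.indicator fun _ => (R + MJ) * (R + (nrmk (c i) + MJ)) : _ → ℝ) (volume.restrict Ω))
    · exact (hFmeas.indicator hSmeas).aestronglyMeasurable
    · filter_upwards with x
      by_cases hxS : x ∈ S
      · rw [hf0def, Set.indicator_of_mem hxS, Set.indicator_of_mem hxS, Real.norm_eq_abs]
        have h1 := abs_dotk_le (vm x - J x (c i)) (v'm x - (c i - J x (c i)))
        have h2 : nrmk (vm x - J x (c i)) ≤ R + MJ := by
          have := nrmk_sub_le (vm x) (J x (c i))
          have h3 : nrmk (vm x) ≤ R := (hSsub hxS).2.2.2.1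
          linarith [hMJbd x hxS]
        have h4 : nrmk (v'm x - (c i - J x (c i))) ≤ R + (nrmk (c i) + MJ) := by
          have := nrmk_sub_le (v'm x) (c i - J x (c i))
          have h5 := nrmk_sub_le (c i) (J x (c i))
          have h6 : nrmk (v'm x) ≤ R := (hSsub hxS).2.2.2.2.1
          linarith [hMJbd x hxS]
        calc |F x| ≤ nrmk (vm x - J x (c i)) * nrmk (v'm x - (c i - J x (c i))) := h1
          _ ≤ (R + MJ) * (R + (nrmk (c i) + MJ)) := by
              apply mul_le_mul h2 h4 (nrmk_nonneg _)
              have : (0:ℝ) ≤ R := Nat.cast_nonneg R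
              linarith [hMJ1]
      · rw [hf0def, Set.indicator_of_notMem hxS, Set.indicator_of_notMem hxS]
        simp
  have hf0nonpos : ∀ x, f0 x ≤ 0 := by
    intro x
    by_cases hxS : x ∈ S
    · rw [hf0def, Set.indicator_of_mem hxS]
      have hDlt : D i x < 0 := (hSsub hxS).2.1
      have hFD : F x = D i x := by
        simp only [hFdef, hDdef]
        exact dotk_comm _ _
      rw [hFD]
      exact hDlt.le
    · rw [hf0def, Set.indicator_of_notMem hxS]
  have hzero : ∫ x, f0 x ∂(volume.restrict Ω) = 0 :=
    le_antisymm (integral_nonpos hf0nonpos) hpair'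
  have hneg0 : ∀ᵐ x ∂(volume.restrict Ω), -f0 x = 0 := by
    have h1 : ∫ x, -f0 x ∂(volume.restrict Ω) = 0 := by rw [integral_neg, hzero, neg_zero]
    have h2 := (integral_eq_zero_iff_of_nonneg_ae
      (Filter.Eventually.of_forall fun x => by simpa using hf0nonpos x) hintf0.neg).mp h1
    filter_upwards [h2] with x hx
    simpa using hx
  have hSnull : (volume.restrict Ω) S = 0 := by
    apply measure_mono_null ?_ (ae_iff.mp hneg0)
    intro x hxS
    have hDlt : D i x < 0 := (hSsub hxS).2.1
    have hFD : f0 x = D i x := by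
      rw [hf0def, Set.indicator_of_mem hxS]
      simp only [hFdef, hDdef]
      exact dotk_comm _ _
    show ¬ (-f0 x = 0)
    rw [hFD]
    intro hcontr
    linarith
  rw [hSnull] at hSpos
  exact lt_irrefl _ hSpos
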